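/- arXiv:1609.06252 — 3 statements merged into one kernel-verified Lean document; each statement's English description precedes it below -/
import Mathlib

section
/- Let α < 0 and X ∈ S with pairwise distinct columns. For each column index k, ⟨X_{:,k}, -∂E_α/∂X_{:,k}(X)⟩ > 0, where ∂E_α/∂X_{:,k}(X) = Σ_{j≠k} α (X_{:,k} - X_{:,j}) ‖X_{:,k} - X_{:,j}‖₂^{α-1}. -/
open scoped RealInnerProductSpace
open Finset

/-- The `j`-th column of a matrix, as a vector in Euclidean space. -/
noncomputable def col {n N : ℕ} (X : Matrix (Fin n) (Fin N) ℝ) (j : Fin N) :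
    EuclideanSpace ℝ (Fin n) := WithLp.toLp 2 (fun i => X i j)

/-- The set `S` of matrices all of whose columns are unit vectors. -/
def sphereSet (n N : ℕ) : Set (Matrix (Fin n) (Fin N) ℝ) :=
  {X | ∀ j, ‖col X j‖ = 1}

/-- The Frobenius norm `‖X‖_F = √(Tr (X Xᵀ))`. -/
noncomputable def frob {n N : ℕ} (X : Matrix (Fin n) (Fin N) ℝ) : ℝ :=
  Real.sqrt (Matrix.trace (X * Matrix.transpose X))

/-- The generalized energy `E_α(X) = Σ_i Σ_{j<i} ‖X_{:,i} - X_{:,j}‖₂^α`. -/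
noncomputable def energy {n N : ℕ} (α : ℝ) (X : Matrix (Fin n) (Fin N) ℝ) : ℝ :=
  ∑ i : Fin N, ∑ j ∈ Finset.univ.filter (fun j => j < i), ‖col X i - col X j‖ ^ α

/-- The gradient of `E_α` with respect to the `k`-th column. -/
noncomputable def gradCol {n N : ℕ} (α : ℝ) (X : Matrix (Fin n) (Fin N) ℝ) (k : Fin N) :
    EuclideanSpace ℝ (Fin n) :=
  ∑ j ∈ Finset.univ.filter (fun j => j ≠ k),
    (α * ‖col X k - col X j‖ ^ (α - 1)) • (col X k - col X j)

/-- The gradient matrix `∇E_α(X)`, whose `k`-th column is `gradCol α X k`. -/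
noncomputable def gradMat {n N : ℕ} (α : ℝ) (X : Matrix (Fin n) (Fin N) ℝ) :
    Matrix (Fin n) (Fin N) ℝ := fun i k => gradCol α X k i

/-- The columnwise projection onto `conv(S)`. -/
noncomputable def projS {n N : ℕ} (X : Matrix (Fin n) (Fin N) ℝ) :
    Matrix (Fin n) (Fin N) ℝ :=
  fun i j => if 1 < ‖col X j‖ then X i j / ‖col X j‖ else X i j

/-- Pairwise distinct columns. -/
def distinctCols {n N : ℕ} (X : Matrix (Fin n) (Fin N) ℝ) : Prop :=
  ∀ i j : Fin N, i ≠ j → col X i ≠ col X j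

/-!
For vectors of equal norm, `⟪x, x - y⟫ = ‖x - y‖² / 2`. Hence on the sphere every summand of
`⟪X_{:,k}, ∂E_α/∂X_{:,k}⟫` equals `α ‖X_{:,k} - X_{:,j}‖^(α+1) / 2 < 0`, and there is at least one.
-/

section InnerProduct

variable {E : Type*} [NormedAddCommGroup E] [InnerProductSpace ℝ E] {x y : E}

theorem real_inner_sub_eq_half_norm_sub_sq (h : ‖x‖ = ‖y‖) : ⟪x, x - y⟫ = ‖x - y‖ ^ 2 / 2 := by
  rw [inner_sub_right, real_inner_self_eq_norm_sq, norm_sub_sq_real, h]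
  ring

theorem real_inner_sub_pos_of_norm_eq (h : ‖x‖ = ‖y‖) (hxy : x ≠ y) : 0 < ⟪x, x - y⟫ := by
  have : 0 < ‖x - y‖ := norm_pos_iff.2 (sub_ne_zero.2 hxy)
  rw [real_inner_sub_eq_half_norm_sub_sq h]
  positivity

theorem real_inner_rpow_smul_sub_neg_of_norm_eq {α : ℝ} (hα : α < 0) (h : ‖x‖ = ‖y‖)
    (hxy : x ≠ y) : ⟪x, (α * ‖x - y‖ ^ (α - 1)) • (x - y)⟫ < 0 := by
  have hcoeff : α * ‖x - y‖ ^ (α - 1) < 0 :=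
    mul_neg_of_neg_of_pos hα (Real.rpow_pos_of_pos (norm_pos_iff.2 (sub_ne_zero.2 hxy)) _)
  rw [real_inner_smul_right]
  exact mul_neg_of_neg_of_pos hcoeff (real_inner_sub_pos_of_norm_eq h hxy)

end InnerProduct

theorem inner_col_gradCol_neg {n N : ℕ} (hN : 2 ≤ N) {α : ℝ} (hα : α < 0)
    {X : Matrix (Fin n) (Fin N) ℝ} (hX : X ∈ sphereSet n N) (hd : distinctCols X) (k : Fin N) :
    ⟪col X k, gradCol α X k⟫ < 0 := by
  have : Nontrivial (Fin N) := Fin.nontrivial_iff_two_le.mpr hN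
  obtain ⟨j₀, hj₀⟩ := exists_ne k
  rw [gradCol, inner_sum]
  refine Finset.sum_neg (fun j hj => ?_) ⟨j₀, Finset.mem_filter.mpr ⟨Finset.mem_univ j₀, hj₀⟩⟩
  have hjk : j ≠ k := (Finset.mem_filter.mp hj).2
  exact real_inner_rpow_smul_sub_neg_of_norm_eq hα ((hX k).trans (hX j).symm) (hd k j hjk.symm)

theorem inner_col_neg_gradCol_pos {n N : ℕ} (hN : 2 ≤ N) (α : ℝ) (hα : α < 0)
    (X : Matrix (Fin n) (Fin N) ℝ) (hX : X ∈ sphereSet n N) (hd : distinctCols X) :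
    ∀ k : Fin N, 0 < ⟪col X k, -gradCol α X k⟫ := by
  intro k
  rw [inner_neg_right, neg_pos]
  exact inner_col_gradCol_neg hN hα hX hd k
end

section
/- Let α < 0 and X ∈ S with pairwise distinct columns. Then the Frobenius inner product ⟨X, -∇E_α(X)⟩_F > 0, i.e., the steepest descent direction points outward from conv(S). -/
open scoped RealInnerProductSpace
open Finset

/-!
The gradient weights `α ‖x_k - x_j‖ ^ (α - 1)` are symmetric in `k, j`, so pairing the
`(k, j)` and `(j, k)` terms of `∑ₖ ⟪x_k, ∇ₖ E_α⟫` turns `⟪x_k, x_k - x_j⟫ - ⟪x_j, x_k - x_j⟫`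
into `‖x_k - x_j‖²`. Hence `2 ⟪X, ∇E_α(X)⟫_F = α ∑_{k,j} ‖x_k - x_j‖ ^ (α + 1)`, which is
negative as soon as two columns differ.
-/

theorem two_mul_sum_inner_sum_smul_sub {ι E : Type*} [Fintype ι] [NormedAddCommGroup E]
    [InnerProductSpace ℝ E] {w : ι → ι → ℝ} (hw : ∀ i j, w i j = w j i)
    (x : ι → E) :
    2 * ∑ i, ⟪x i, ∑ j, w i j • (x i - x j)⟫ = ∑ i, ∑ j, w i j * ‖x i - x j‖ ^ 2 := by
  simp_rw [inner_sum, real_inner_smul_right]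
  have hswap : ∑ i, ∑ j, w i j * ⟪x i, x i - x j⟫
      = ∑ i, ∑ j, w i j * -⟪x j, x i - x j⟫ := by
    rw [Finset.sum_comm]
    refine Finset.sum_congr rfl fun i _ => Finset.sum_congr rfl fun j _ => ?_
    rw [hw, ← inner_neg_right, neg_sub]
  rw [two_mul]
  nth_rewrite 2 [hswap]
  rw [← Finset.sum_add_distrib]
  refine Finset.sum_congr rfl fun i _ => ?_
  rw [← Finset.sum_add_distrib]
  refine Finset.sum_congr rfl fun j _ => ?_
  rw [← real_inner_self_eq_norm_sq, inner_sub_left]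
  ring

theorem sum_sum_rpow_mul_sq_norm_sub_pos {ι E : Type*} [Fintype ι] [NormedAddCommGroup E]
    {x : ι → E} (hx : ∃ i j, x i ≠ x j) (β : ℝ) :
    0 < ∑ i, ∑ j, ‖x i - x j‖ ^ β * ‖x i - x j‖ ^ 2 := by
  obtain ⟨i, j, hij⟩ := hx
  rw [← Fintype.sum_prod_type']
  refine Finset.sum_pos' (fun _ _ => by positivity) ⟨(i, j), Finset.mem_univ _, ?_⟩
  have hpos : 0 < ‖x i - x j‖ := norm_pos_iff.mpr (sub_ne_zero.mpr hij)
  positivity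

theorem trace_mul_transpose_eq_sum_inner_col {n N : ℕ} (X Y : Matrix (Fin n) (Fin N) ℝ) :
    Matrix.trace (X * Y.transpose) = ∑ k, ⟪col X k, col Y k⟫ := by
  simp only [Matrix.trace, Matrix.diag, Matrix.mul_apply, Matrix.transpose_apply,
    PiLp.inner_apply, col, RCLike.inner_apply, conj_trivial]
  rw [Finset.sum_comm]
  simp_rw [mul_comm]

theorem col_gradMat {n N : ℕ} (α : ℝ) (X : Matrix (Fin n) (Fin N) ℝ) (k : Fin N) :
    col (gradMat α X) k = gradCol α X k :=
  rfl

theorem gradCol_eq_sum {n N : ℕ} (α : ℝ) (X : Matrix (Fin n) (Fin N) ℝ) (k : Fin N) :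
    gradCol α X k = ∑ j, (α * ‖col X k - col X j‖ ^ (α - 1)) • (col X k - col X j) := by
  refine Finset.sum_filter_of_ne fun j _ hj => ?_
  rintro rfl
  simp at hj

theorem frob_inner_neg_grad_pos_general {n N : ℕ} (hN : 2 ≤ N) (α : ℝ) (hα : α < 0)
    (X : Matrix (Fin n) (Fin N) ℝ) (hd : distinctCols X) :
    0 < Matrix.trace (X * Matrix.transpose (-(gradMat α X))) := by
  have hsum : 2 * ∑ k, ⟪col X k, gradCol α X k⟫
      = α * ∑ k, ∑ j, ‖col X k - col X j‖ ^ (α - 1) * ‖col X k - col X j‖ ^ 2 := by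
    simp_rw [gradCol_eq_sum]
    rw [two_mul_sum_inner_sum_smul_sub (w := fun k j => α * ‖col X k - col X j‖ ^ (α - 1))
      fun k j => by rw [norm_sub_rev]]
    simp_rw [Finset.mul_sum, mul_assoc]
  have hpos : 0 < ∑ k, ∑ j, ‖col X k - col X j‖ ^ (α - 1) * ‖col X k - col X j‖ ^ 2 := by
    have := Fin.nontrivial_iff_two_le.mpr hN
    obtain ⟨i, j, hij⟩ := exists_pair_ne (Fin N)
    exact sum_sum_rpow_mul_sq_norm_sub_pos ⟨i, j, hd i j hij⟩ _
  rw [Matrix.transpose_neg, Matrix.mul_neg, Matrix.trace_neg,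
    trace_mul_transpose_eq_sum_inner_col]
  simp_rw [col_gradMat]
  linarith [mul_neg_of_neg_of_pos hα hpos]

theorem frob_inner_neg_grad_pos {n N : ℕ} (hN : 2 ≤ N) (α : ℝ) (hα : α < 0)
    (X : Matrix (Fin n) (Fin N) ℝ) (hX : X ∈ sphereSet n N) (hd : distinctCols X) :
    0 < Matrix.trace (X * Matrix.transpose (-(gradMat α X))) :=
  frob_inner_neg_grad_pos_general hN α hα X hd
end

section
/- Let α < 0 and X ∈ S with pairwise distinct columns. Then for every γ > 0 and every column index k, ‖X_{:,k} - γ ∂E_α/∂X_{:,k}(X)‖₂ > 1. -/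
open scoped RealInnerProductSpace
open Finset

/-!
For unit vectors `x ≠ y` one has `⟪x, x - y⟫ = ‖x - y‖² / 2 > 0`, so for `α < 0` every term of
`∂E_α/∂x_k` has negative inner product with the unit column `x_k`. The step `-γ ∂E_α/∂x_k` thus
makes an acute angle with `x_k`, and `‖x - y‖² = ‖x‖² - 2⟪x, y⟫ + ‖y‖²` puts `x_k` plus that
step strictly outside the unit sphere.
-/

section InnerProduct

variable {E : Type*} [NormedAddCommGroup E] [InnerProductSpace ℝ E]

theorem norm_lt_norm_sub_of_inner_neg {x y : E} (h : ⟪x, y⟫ < 0) : ‖x‖ < ‖x - y‖ := by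
  have hsq : ‖x‖ ^ 2 < ‖x - y‖ ^ 2 := by
    rw [norm_sub_sq_real]
    nlinarith [sq_nonneg ‖y‖]
  exact (sq_lt_sq₀ (norm_nonneg _) (norm_nonneg _)).mp hsq

theorem inner_sub_pos_of_norm_eq_of_ne {x y : E} (hxy : ‖x‖ = ‖y‖) (hne : x ≠ y) :
    0 < ⟪x, x - y⟫ := by
  have hpos : 0 < ‖x - y‖ := norm_pos_iff.mpr (sub_ne_zero.mpr hne)
  have hhalf : ⟪x, x - y⟫ = ‖x - y‖ ^ 2 / 2 := by
    rw [norm_sub_sq_real, inner_sub_right, real_inner_self_eq_norm_sq, ← hxy]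
    ring
  rw [hhalf]
  positivity

end InnerProduct

theorem norm_col_grad_step_gt_one {n N : ℕ} (hN : 2 ≤ N) (α : ℝ) (hα : α < 0)
    (X : Matrix (Fin n) (Fin N) ℝ) (hX : X ∈ sphereSet n N) (hd : distinctCols X)
    (γ : ℝ) (hγ : 0 < γ) :
    ∀ k : Fin N, 1 < ‖col X k - γ • gradCol α X k‖ := by
  intro k
  have hstep : ⟪col X k, γ • gradCol α X k⟫ < 0 := by
    rw [real_inner_smul_right]
    exact mul_neg_of_pos_of_neg hγ (inner_col_gradCol_neg hN hα hX hd k)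
  calc (1 : ℝ) = ‖col X k‖ := (hX k).symm
    _ < ‖col X k - γ • gradCol α X k‖ := norm_lt_norm_sub_of_inner_neg hstep
end
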